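/- arXiv:2009.08840 — 3 statements merged into one kernel-verified Lean document; each statement's English description precedes it below -/
import Mathlib

section
/- For n-qubit unitaries U and Ũ, define D(U,Ũ) = sqrt(1 - |Tr(U†Ũ)/2^n|²) and D^max(U,Ũ) = max over unit vectors φ of sqrt(1 - |⟨φ|U†Ũ|φ⟩|²). Then D^max(U,Ũ) ≤ 2^{(n+1)/2} · D(U,Ũ). -/
open Matrix

section helpers
variable {N : ℕ}

private lemma dot_self_eq (w : Fin N → ℂ) :
    star w ⬝ᵥ w = ((∑ i, Complex.normSq (w i) : ℝ) : ℂ) := by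
  push_cast
  simp [dotProduct, Complex.normSq_eq_conj_mul_self]

private lemma cs_abs (f g : Fin N → ℂ) :
    ‖∑ j, f j * g j‖ ^ 2 ≤
      (∑ j, Complex.normSq (f j)) * (∑ j, Complex.normSq (g j)) := by
  have h1 : ‖∑ j, f j * g j‖ ≤ ∑ j, ‖f j‖ * ‖g j‖ := by
    refine le_trans (norm_sum_le _ _) ?_
    simp [norm_mul]
  have h2 := Finset.sum_mul_sq_le_sq_mul_sq Finset.univ
    (fun j => ‖f j‖) (fun j => ‖g j‖)
  calc ‖∑ j, f j * g j‖ ^ 2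
      ≤ (∑ j, ‖f j‖ * ‖g j‖) ^ 2 := by
        apply pow_le_pow_left₀ (norm_nonneg _) h1
    _ ≤ (∑ j, ‖f j‖ ^ 2) * (∑ j, ‖g j‖ ^ 2) := h2
    _ = (∑ j, Complex.normSq (f j)) * (∑ j, Complex.normSq (g j)) := by
        simp [Complex.sq_norm]

private lemma unitary_dot (V : Matrix (Fin N) (Fin N) ℂ)
    (hV : V ∈ Matrix.unitaryGroup (Fin N) ℂ) (φ : Fin N → ℂ) :
    ∑ i, Complex.normSq ((V *ᵥ φ) i) = ∑ i, Complex.normSq (φ i) := by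
  have h1 : star (V *ᵥ φ) ⬝ᵥ (V *ᵥ φ) = star φ ⬝ᵥ φ := by
    rw [star_mulVec, dotProduct_mulVec, vecMul_vecMul, ← star_eq_conjTranspose, hV.1,
      vecMul_one]
  have := (dot_self_eq (V *ᵥ φ)).symm.trans (h1.trans (dot_self_eq φ))
  exact_mod_cast this

private lemma dot_conj (V : Matrix (Fin N) (Fin N) ℂ) (φ : Fin N → ℂ) :
    star φ ⬝ᵥ (Vᴴ *ᵥ φ) = star (star φ ⬝ᵥ (V *ᵥ φ)) := by
  rw [star_dotProduct]
  congr 1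
  rw [star_mulVec, conjTranspose_conjTranspose, ← dotProduct_mulVec]

end helpers

private lemma key_bound {N : ℕ} (V : Matrix (Fin N) (Fin N) ℂ)
    (hV : V ∈ Matrix.unitaryGroup (Fin N) ℂ) (φ : Fin N → ℂ)
    (hφ : ∑ i, Complex.normSq (φ i) = 1) :
    1 - ‖star φ ⬝ᵥ (V *ᵥ φ)‖ ^ 2 ≤ 2 * N - 2 * ‖V.trace‖ := by
  set z := star φ ⬝ᵥ (V *ᵥ φ) with hz
  -- phase factor
  set c : ℂ := if V.trace = 0 then 1 else (starRingEnd ℂ) V.trace / (‖V.trace‖ : ℂ)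
    with hcdef
  have hcabs : ‖c‖ = 1 := by
    by_cases h : V.trace = 0
    · simp [hcdef, h]
    · have ha : ‖V.trace‖ ≠ 0 := by simpa using h
      simp only [hcdef, if_neg h]
      rw [norm_div, Complex.norm_conj, Complex.norm_real, norm_norm,
        div_self ha]
  have hc : c * star c = 1 := by
    rw [RCLike.star_def, Complex.mul_conj, ← Complex.sq_norm, hcabs]
    norm_num
  have hct : c * V.trace = (‖V.trace‖ : ℂ) := by
    by_cases h : V.trace = 0
    · simp [hcdef, h]
    · have ha : (‖V.trace‖ : ℝ) ≠ 0 := by simpa using h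
      simp only [hcdef, if_neg h]
      have ha' : (‖V.trace‖ : ℂ) ≠ 0 := Complex.ofReal_ne_zero.mpr ha
      rw [div_mul_eq_mul_div, mul_comm, Complex.mul_conj, ← Complex.sq_norm]
      push_cast
      rw [sq, mul_div_assoc, div_self ha', mul_one]
  -- the vector ψ
  set B : Matrix (Fin N) (Fin N) ℂ := 1 - c • V with hBdef
  set ψ := Bᴴ *ᵥ φ with hψdef
  have hVH : Vᴴ ∈ Matrix.unitaryGroup (Fin N) ℂ := by
    rw [← star_eq_conjTranspose]; exact Unitary.star_mem hV
  have hφdot : star φ ⬝ᵥ φ = 1 := by rw [dot_self_eq, hφ]; exact Complex.ofReal_one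
  have hVHφ : star (Vᴴ *ᵥ φ) ⬝ᵥ (Vᴴ *ᵥ φ) = 1 := by
    rw [dot_self_eq, unitary_dot Vᴴ hVH φ, hφ]; exact Complex.ofReal_one
  have hψdot : star ψ ⬝ᵥ ψ = 2 - (c * z + star (c * z)) := by
    have hψ2 : ψ = φ - star c • (Vᴴ *ᵥ φ) := by
      rw [hψdef, hBdef, conjTranspose_sub, conjTranspose_one, conjTranspose_smul,
        sub_mulVec, one_mulVec, smul_mulVec]
    rw [hψ2, star_sub, star_smul, star_star]
    simp only [sub_dotProduct, dotProduct_sub, smul_dotProduct, dotProduct_smul]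
    rw [hφdot, hVHφ, dot_conj V φ]
    have h1 : star (Vᴴ *ᵥ φ) ⬝ᵥ φ = z := by
      rw [star_dotProduct, dot_conj V φ, star_star]
    rw [h1]
    simp only [smul_eq_mul]
    rw [star_mul']
    linear_combination hc
  have hψsum : (∑ i, Complex.normSq (ψ i)) = 2 - 2 * (c * z).re := by
    have h := (dot_self_eq ψ).symm.trans hψdot
    have h2 : ((∑ i, Complex.normSq (ψ i) : ℝ) : ℂ) = ((2 - 2 * (c * z).re : ℝ) : ℂ) := by
      rw [h, RCLike.star_def, Complex.add_conj]
      push_cast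
      ring
    exact_mod_cast h2
  -- Frobenius norm of B
  have hF : ((∑ i, ∑ j, Complex.normSq (B i j)) : ℝ) = 2 * N - 2 * ‖V.trace‖ := by
    have h1 : ((∑ i, ∑ j, Complex.normSq (B i j)) : ℂ) = (B * Bᴴ).trace := by
      rw [Matrix.trace]
      congr 1
      ext i
      rw [Matrix.diag_apply, Matrix.mul_apply]
      congr 1
      ext j
      rw [conjTranspose_apply, RCLike.star_def, Complex.mul_conj]
    have h2 : (B * Bᴴ).trace = 2 * N - 2 * (‖V.trace‖ : ℂ) := by
      have hBH : Bᴴ = 1 - star c • Vᴴ := by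
        rw [hBdef, conjTranspose_sub, conjTranspose_one, conjTranspose_smul]
      rw [hBdef, hBH]
      rw [sub_mul, mul_sub, mul_sub, Matrix.one_mul, Matrix.one_mul, Matrix.mul_one,
        Matrix.smul_mul, Matrix.mul_smul, smul_smul]
      have hVVH : V * Vᴴ = 1 := by rw [← star_eq_conjTranspose]; exact hV.2
      rw [hVVH, hc, one_smul]
      rw [trace_sub, trace_sub, trace_sub, trace_smul, trace_smul, trace_one,
        trace_conjTranspose]
      have : star c • star V.trace = star (c * V.trace) := by
        rw [star_mul', smul_eq_mul]
      rw [this, smul_eq_mul, hct, RCLike.star_def, Complex.conj_ofReal]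
      simp only [Fintype.card_fin]
      ring
    have h3 : ((∑ i, ∑ j, Complex.normSq (B i j)) : ℂ) = ((2 * N - 2 * ‖V.trace‖ : ℝ) : ℂ) := by
      rw [h1, h2]; push_cast; ring
    exact_mod_cast h3
  -- Cauchy–Schwarz entrywise
  have hCS : (∑ i, Complex.normSq (ψ i)) ≤ ∑ i, ∑ j, Complex.normSq (B i j) := by
    have hrow : ∀ i, Complex.normSq (ψ i) ≤ ∑ j, Complex.normSq (Bᴴ i j) := by
      intro i
      have h1 : ψ i = ∑ j, Bᴴ i j * φ j := by
        rw [hψdef]; rfl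
      have h2 := cs_abs (fun j => Bᴴ i j) φ
      rw [hφ, mul_one] at h2
      rw [h1, ← Complex.sq_norm]
      exact h2
    calc (∑ i, Complex.normSq (ψ i)) ≤ ∑ i, ∑ j, Complex.normSq (Bᴴ i j) :=
          Finset.sum_le_sum fun i _ => hrow i
      _ = ∑ i, ∑ j, Complex.normSq (B i j) := by
          rw [Finset.sum_comm]
          congr 1; ext i; congr 1; ext j
          rw [conjTranspose_apply, RCLike.star_def, Complex.normSq_conj]
  -- assemble
  have habs : (c * z).re ≤ ‖z‖ := by
    calc (c * z).re ≤ ‖c * z‖ := Complex.re_le_norm _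
      _ = ‖z‖ := by rw [norm_mul, hcabs, one_mul]
  have hsq : 1 - ‖z‖ ^ 2 ≤ 2 - 2 * ‖z‖ := by
    nlinarith [sq_nonneg (‖z‖ - 1)]
  linarith [hψsum, hF, hCS, habs, hsq]

/-- D^max(U,Ũ) ≤ 2^{(n+1)/2} · D(U,Ũ) for n-qubit unitaries. -/
theorem dmax_le_pow_mul_d (n : ℕ) (U Ut : Matrix (Fin (2 ^ n)) (Fin (2 ^ n)) ℂ)
    (hU : U ∈ Matrix.unitaryGroup (Fin (2 ^ n)) ℂ)
    (hUt : Ut ∈ Matrix.unitaryGroup (Fin (2 ^ n)) ℂ) :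
    sSup {x : ℝ | ∃ φ : Fin (2 ^ n) → ℂ, (∑ i, ‖φ i‖ ^ 2) = 1 ∧
        x = Real.sqrt (1 - ‖∑ i, star (φ i) * ((Uᴴ * Ut).mulVec φ i)‖ ^ 2)} ≤
      (2 : ℝ) ^ (((n : ℝ) + 1) / 2) *
        Real.sqrt (1 - ‖(Uᴴ * Ut).trace / 2 ^ n‖ ^ 2) := by
  have hV : Uᴴ * Ut ∈ Matrix.unitaryGroup (Fin (2 ^ n)) ℂ := by
    rw [← star_eq_conjTranspose]
    exact mul_mem (Unitary.star_mem hU) hUt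
  set V : Matrix (Fin (2 ^ n)) (Fin (2 ^ n)) ℂ := Uᴴ * Ut with hVdef
  set Nr : ℝ := (2 : ℝ) ^ n with hNr
  have hNrpos : 0 < Nr := by positivity
  set t := ‖V.trace‖ with ht
  have ht0 : 0 ≤ t := norm_nonneg _
  -- |tr V| ≤ N
  have htN : t ≤ Nr := by
    have hrow : ∀ i, ‖V i i‖ ≤ 1 := by
      intro i
      have h := congrFun (congrFun hV.2 i) i
      rw [Matrix.mul_apply, Matrix.one_apply_eq] at h
      have h2 : ((∑ j, Complex.normSq (V i j) : ℝ) : ℂ) = 1 := by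
        rw [← h]
        push_cast
        congr 1
        ext j
        rw [star_apply, RCLike.star_def, Complex.mul_conj]
      have h3 : (∑ j, Complex.normSq (V i j)) = 1 := by exact_mod_cast h2
      have h4 : Complex.normSq (V i i) ≤ 1 := by
        rw [← h3]
        exact Finset.single_le_sum (fun j _ => Complex.normSq_nonneg _) (Finset.mem_univ i)
      rw [← Complex.sq_norm] at h4
      nlinarith [norm_nonneg (V i i)]
    calc t ≤ ∑ i, ‖V i i‖ := by
          rw [ht, Matrix.trace]
          exact norm_sum_le _ _
      _ ≤ ∑ _i : Fin (2 ^ n), (1 : ℝ) := Finset.sum_le_sum fun i _ => hrow i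
      _ = Nr := by simp [hNr]
  have habs_div : ‖V.trace / 2 ^ n‖ = t / Nr := by
    rw [norm_div, norm_pow, Complex.norm_two]
  have hpow : (2 : ℝ) ^ (((n : ℝ) + 1) / 2) = Real.sqrt (2 * Nr) := by
    have h1 : ((n : ℝ) + 1) / 2 = ((n + 1 : ℕ) : ℝ) * (1 / 2) := by push_cast; ring
    rw [h1, Real.rpow_mul (by norm_num), Real.rpow_natCast, ← Real.sqrt_eq_rpow]
    congr 1
    rw [pow_succ, hNr]
    ring
  apply Real.sSup_le
  · rintro x ⟨φ, hφ1, rfl⟩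
    have hφ : ∑ i, Complex.normSq (φ i) = 1 := by
      rw [← hφ1]
      congr 1
      ext i
      rw [Complex.sq_norm]
    have hkey := key_bound V hV φ hφ
    have hcast : ((2 ^ n : ℕ) : ℝ) = Nr := by push_cast; rw [hNr]
    rw [hcast] at hkey
    set a := ‖star φ ⬝ᵥ (V *ᵥ φ)‖ with ha
    have hzeq : ‖∑ i, star (φ i) * (V.mulVec φ i)‖ = a := rfl
    rw [hzeq]
    have h2 : t ^ 2 / Nr ≤ t := by
      rw [div_le_iff₀ hNrpos]
      nlinarith
    have h3 : 2 * Nr * (1 - (t / Nr) ^ 2) = 2 * Nr - 2 * (t ^ 2 / Nr) := by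
      field_simp
    have h1 : 1 - a ^ 2 ≤ 2 * Nr * (1 - (t / Nr) ^ 2) := by linarith
    calc Real.sqrt (1 - a ^ 2) ≤ Real.sqrt (2 * Nr * (1 - (t / Nr) ^ 2)) :=
          Real.sqrt_le_sqrt h1
      _ = Real.sqrt (2 * Nr) * Real.sqrt (1 - (t / Nr) ^ 2) :=
          Real.sqrt_mul (by positivity) _
      _ = (2 : ℝ) ^ (((n : ℝ) + 1) / 2) * Real.sqrt (1 - ‖V.trace / 2 ^ n‖ ^ 2) := by
          rw [hpow, habs_div]
  · positivity
end

section
/- If U is an n-qubit unitary such that for every n-qubit Pauli P ∈ {I,X,Y,Z}^{⊗n}, UPU† equals ±P' for some n-qubit Pauli P', and for at least half of the 4^n Paulis P the resulting P' differs from P, then |Tr(U)|² ≤ 2^{2n−1}. -/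
open Matrix
open scoped Classical

/-- The single-qubit Pauli matrices I, X, Y, Z. -/
noncomputable def pauli : Fin 4 → Matrix (Fin 2) (Fin 2) ℂ
  | 0 => 1
  | 1 => !![0, 1; 1, 0]
  | 2 => !![0, -Complex.I; Complex.I, 0]
  | 3 => !![1, 0; 0, -1]

/-- The n-qubit Pauli matrix given by a choice of single-qubit Pauli on each qubit. -/
noncomputable def nPauli {n : ℕ} (f : Fin n → Fin 4) :
    Matrix (Fin n → Fin 2) (Fin n → Fin 2) ℂ :=
  fun i j => ∏ k, pauli (f k) (i k) (j k)

lemma pauli_sum_eq (b c d e : Fin 2) :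
    ∑ a : Fin 4, pauli a b c * pauli a d e =
      if b = e ∧ c = d then 2 else 0 := by
  fin_cases b <;> fin_cases c <;> fin_cases d <;> fin_cases e <;>
    simp [pauli, Fin.sum_univ_four, Matrix.one_apply] <;> ring_nf

lemma pauli_trace (a b : Fin 4) : (pauli a * pauli b).trace = if a = b then 2 else 0 := by
  fin_cases a <;> fin_cases b <;>
    simp [pauli, Matrix.trace, Matrix.mul_apply, Fin.sum_univ_two, Matrix.one_apply] <;>
    ring_nf

lemma prod_sum' {ι : Type*} [Fintype ι] [DecidableEq ι] {κ : ι → Type*}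
    [∀ i, Fintype (κ i)] (f : ∀ i, κ i → ℂ) :
    ∏ i, ∑ j, f i j = ∑ x : ∀ i, κ i, ∏ i, f i (x i) := by
  rw [Finset.prod_univ_sum]
  rw [Fintype.piFinset_univ]

lemma nPauli_mul {n : ℕ} (f g : Fin n → Fin 4) (i j : Fin n → Fin 2) :
    (nPauli f * nPauli g) i j = ∏ k, (pauli (f k) * pauli (g k)) (i k) (j k) := by
  rw [Matrix.mul_apply]
  simp only [Matrix.mul_apply, nPauli]
  rw [prod_sum' (fun k (v : Fin 2) => pauli (f k) (i k) v * pauli (g k) v (j k))]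
  congr 1
  ext x
  rw [← Finset.prod_mul_distrib]

lemma nPauli_trace_mul {n : ℕ} (f g : Fin n → Fin 4) :
    (nPauli f * nPauli g).trace = if f = g then (2 : ℂ) ^ n else 0 := by
  have : (nPauli f * nPauli g).trace = ∏ k, (pauli (f k) * pauli (g k)).trace := by
    simp only [Matrix.trace, Matrix.diag]
    simp only [nPauli_mul, Matrix.trace]
    rw [prod_sum' (fun k (v : Fin 2) => (pauli (f k) * pauli (g k)) v v)]
  rw [this]
  simp only [pauli_trace]
  by_cases h : f = g
  · simp [h]
  · rw [if_neg h]
    obtain ⟨k, hk⟩ := Function.ne_iff.mp h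
    exact Finset.prod_eq_zero (Finset.mem_univ k) (by simp [hk])

lemma nPauli_sum_apply {n : ℕ} (i j k l : Fin n → Fin 2) :
    ∑ f : Fin n → Fin 4, nPauli f i j * nPauli f k l
      = if i = l ∧ j = k then (2:ℂ)^n else 0 := by
  simp only [nPauli, ← Finset.prod_mul_distrib]
  rw [← prod_sum' (fun m (a : Fin 4) => pauli a (i m) (j m) * pauli a (k m) (l m))]
  simp only [pauli_sum_eq]
  by_cases h : i = l ∧ j = k
  · obtain ⟨h1, h2⟩ := h
    subst h1; subst h2
    simp
  · rw [if_neg h]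
    have : ∃ m, ¬(i m = l m ∧ j m = k m) := by
      by_contra hc
      push_neg at hc
      exact h ⟨funext fun m => (hc m).1, funext fun m => (hc m).2⟩
    obtain ⟨m, hm⟩ := this
    exact Finset.prod_eq_zero (Finset.mem_univ m) (if_neg hm)

lemma sum_conj {n : ℕ} (X : Matrix (Fin n → Fin 2) (Fin n → Fin 2) ℂ) :
    ∑ f : Fin n → Fin 4, nPauli f * X * nPauli f = ((2:ℂ)^n * X.trace) • 1 := by
  ext i l
  rw [Matrix.sum_apply]
  calc ∑ f : Fin n → Fin 4, (nPauli f * X * nPauli f) i l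
      = ∑ f : Fin n → Fin 4, ∑ k, ∑ j, X j k * (nPauli f i j * nPauli f k l) := by
        refine Finset.sum_congr rfl fun f _ => ?_
        simp only [Matrix.mul_apply, Finset.sum_mul]
        refine Finset.sum_congr rfl fun k _ => Finset.sum_congr rfl fun j _ => ?_
        ring
    _ = ∑ k, ∑ j, X j k * ∑ f : Fin n → Fin 4, (nPauli f i j * nPauli f k l) := by
        rw [Finset.sum_comm]
        refine Finset.sum_congr rfl fun k _ => ?_
        rw [Finset.sum_comm]
        exact Finset.sum_congr rfl fun j _ => (Finset.mul_sum _ _ _).symm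
    _ = ((2:ℂ)^n * X.trace) • (1 : Matrix (Fin n → Fin 2) (Fin n → Fin 2) ℂ) i l := by
        simp only [nPauli_sum_apply]
        by_cases h : i = l
        · subst h
          simp [Matrix.trace, Matrix.diag, Finset.mul_sum, mul_comm]
        · simp [h, Matrix.one_apply]

lemma key_trace {n : ℕ} (U : Matrix (Fin n → Fin 2) (Fin n → Fin 2) ℂ) :
    ∑ f : Fin n → Fin 4, (U * nPauli f * Uᴴ * nPauli f).trace
      = (2:ℂ)^n * (Uᴴ.trace * U.trace) := by
  have h1 : ∀ f : Fin n → Fin 4, U * nPauli f * Uᴴ * nPauli f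
      = U * (nPauli f * Uᴴ * nPauli f) := by
    intro f; rw [mul_assoc, mul_assoc, mul_assoc]
  simp only [h1]
  rw [← Matrix.trace_sum, ← Finset.mul_sum, sum_conj, Matrix.mul_smul, Matrix.mul_one,
    Matrix.trace_smul]
  simp [smul_eq_mul]; ring

/-- If U is an n-qubit unitary mapping every Pauli to ±(some Pauli)
under conjugation, and for at least half of the 4^n Paulis the resulting Pauli
differs from the original (even up to sign), then |Tr(U)|² ≤ 2^{2n-1}. -/
theorem abs_trace_sq_le_of_half_paulis_moved (n : ℕ)
    (U : Matrix (Fin n → Fin 2) (Fin n → Fin 2) ℂ)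
    (hU : U ∈ Matrix.unitaryGroup (Fin n → Fin 2) ℂ)
    (hCliff : ∀ f : Fin n → Fin 4, ∃ g : Fin n → Fin 4, ∃ s : ℂ,
      (s = 1 ∨ s = -1) ∧ U * nPauli f * Uᴴ = s • nPauli g)
    (hHalf : 4 ^ n ≤ 2 * (Finset.univ.filter
      (fun f : Fin n → Fin 4 => ∀ s : ℂ, U * nPauli f * Uᴴ ≠ s • nPauli f)).card) :
    ‖U.trace‖ ^ 2 ≤ 2 ^ (2 * n - 1) := by
  set P : (Fin n → Fin 4) → Prop :=
    fun f => ∀ s : ℂ, U * nPauli f * Uᴴ ≠ s • nPauli f with hP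
  set term : (Fin n → Fin 4) → ℂ :=
    fun f => (U * nPauli f * Uᴴ * nPauli f).trace with hterm
  -- each term vanishes on moved Paulis, and is bounded by 2^n in general
  have hterm0 : ∀ f, P f → term f = 0 := by
    intro f hf
    obtain ⟨g, s, hs, heq⟩ := hCliff f
    have hgf : g ≠ f := by
      rintro rfl
      exact hf s heq
    simp only [hterm, heq, Matrix.smul_mul, Matrix.trace_smul, smul_eq_mul,
      nPauli_trace_mul, if_neg hgf, mul_zero]
  have htermb : ∀ f, ‖term f‖ ≤ 2 ^ n := by
    intro f
    obtain ⟨g, s, hs, heq⟩ := hCliff f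
    have : term f = s * (if g = f then (2:ℂ)^n else 0) := by
      simp only [hterm, heq, Matrix.smul_mul, Matrix.trace_smul, smul_eq_mul,
        nPauli_trace_mul]
    rw [this, norm_mul]
    have habs : ‖s‖ = 1 := by rcases hs with rfl | rfl <;> simp
    rw [habs, one_mul]
    by_cases h : g = f
    · simp [h, norm_pow]
    · simp [h]
  -- bound the total sum
  have hsum : ‖∑ f : Fin n → Fin 4, term f‖
      ≤ ((Finset.univ.filter fun f => ¬ P f).card : ℝ) * 2 ^ n := by
    refine (norm_sum_le _ _).trans ?_
    rw [← Finset.sum_filter_add_sum_filter_not Finset.univ P]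
    have h1 : ∑ f ∈ Finset.univ.filter P, ‖term f‖ = 0 := by
      refine Finset.sum_eq_zero fun f hf => ?_
      rw [hterm0 f (Finset.mem_filter.mp hf).2]
      simp
    rw [h1, zero_add]
    calc ∑ f ∈ Finset.univ.filter (fun f => ¬ P f), ‖term f‖
        ≤ ∑ f ∈ Finset.univ.filter (fun f => ¬ P f), (2:ℝ) ^ n :=
          Finset.sum_le_sum fun f _ => htermb f
      _ = _ := by rw [Finset.sum_const, nsmul_eq_mul]
  -- card bound
  have hcard : ((Finset.univ.filter fun f => ¬ P f).card : ℝ) ≤ 2 ^ (2 * n - 1) := by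
    have htot := Finset.card_filter_add_card_filter_not (s := Finset.univ)
      (p := P)
    rw [Finset.card_univ] at htot
    have hcu : Fintype.card (Fin n → Fin 4) = 4 ^ n := by simp
    have h4 : (4:ℕ) ^ n = 2 ^ (2 * n) := by
      rw [show (4:ℕ) = 2 ^ 2 by norm_num, ← pow_mul]
    have h2 : (2:ℕ) ^ (2 * n) ≤ 2 * 2 ^ (2 * n - 1) := by
      cases n with
      | zero => norm_num
      | succ m =>
        rw [show 2 * (m + 1) - 1 = 2 * m + 1 by omega, show 2 * (m+1) = (2*m+1) + 1 by omega,
          pow_succ]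
        ring_nf; omega
    have hHalf' : 4 ^ n ≤ 2 * (Finset.univ.filter P).card := by
      convert hHalf using 3
    have : (Finset.univ.filter fun f => ¬ P f).card ≤ 2 ^ (2 * n - 1) := by omega
    exact_mod_cast this
  -- the value of the sum
  have hval : ‖∑ f : Fin n → Fin 4, term f‖
      = 2 ^ n * ‖U.trace‖ ^ 2 := by
    rw [hterm, key_trace, Matrix.trace_conjTranspose, norm_mul, norm_mul]
    have : ‖star U.trace‖ = ‖U.trace‖ := by
      simp [norm_star]
    rw [this]
    simp [norm_pow]
    ring
  rw [hval] at hsum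
  have h2n : (0:ℝ) < 2 ^ n := by positivity
  have := hsum.trans (by
    have := mul_le_mul_of_nonneg_right hcard (le_of_lt h2n)
    exact this)
  nlinarith [this]
end

section
/- If two n-qubit Clifford unitaries U and Ũ induce the same linear map 𝔽₂^{2n} → 𝔽₂^{2n} on Paulis (i.e., UPU† and ŨPŨ† equal the same Pauli up to sign, for every n-qubit Pauli P), then there exists an n-qubit Pauli R such that conjugation by U and conjugation by RŨ define the same map on all n-qubit density matrices. -/
open Matrix
open scoped ComplexOrder

namespace Stmt12Aux

/-- encode bits (x, z) into a Pauli index -/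
def enc : Fin 2 → Fin 2 → Fin 4
  | 0, 0 => 0
  | 1, 0 => 1
  | 0, 1 => 3
  | 1, 1 => 2

noncomputable def base (x z : Fin 2) : ℂ := if x = 1 ∧ z = 1 then -Complex.I else 1

lemma pauli_enc (x z a b : Fin 2) :
    pauli (enc x z) a b =
      if b = a + x then (-1 : ℂ) ^ ((z : ℕ) * (a : ℕ)) * base x z else 0 := by
  fin_cases x <;> fin_cases z <;> fin_cases a <;> fin_cases b <;>
    simp [pauli, enc, base, Matrix.one_apply]

lemma base_mul_star (x z : Fin 2) : base x z * star (base x z) = 1 := by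
  unfold base
  split
  · simp [Complex.star_def, Complex.conj_I]
  · simp

lemma base_ne_zero (x z : Fin 2) : base x z ≠ 0 := by
  unfold base
  split
  · simpa using Complex.I_ne_zero
  · norm_num

variable {n : ℕ}

def encF (x z : Fin n → Fin 2) : Fin n → Fin 4 := fun k => enc (x k) (z k)

lemma nPauli_encF (x z : Fin n → Fin 2) (i j : Fin n → Fin 2) :
    nPauli (encF x z) i j =
      if j = i + x then (∏ k, (-1 : ℂ) ^ ((z k : ℕ) * (i k : ℕ))) * ∏ k, base (x k) (z k)
      else 0 := by
  unfold nPauli encF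
  by_cases h : j = i + x
  · subst h
    rw [if_pos rfl, ← Finset.prod_mul_distrib]
    refine Finset.prod_congr rfl fun k _ => ?_
    rw [pauli_enc]
    simp [Pi.add_apply]
  · obtain ⟨k, hk⟩ : ∃ k, j k ≠ i k + x k := by
      by_contra hc; push_neg at hc; exact h (funext hc)
    rw [if_neg h]
    refine Finset.prod_eq_zero (Finset.mem_univ k) ?_
    rw [pauli_enc, if_neg hk]

lemma pauli_inner (a b : Fin 4) :
    (∑ i : Fin 2, ∑ j : Fin 2, star (pauli a i j) * pauli b i j) =
      if a = b then 2 else 0 := by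
  fin_cases a <;> fin_cases b <;>
    simp [pauli, Fin.sum_univ_two, Matrix.one_apply, Complex.ext_iff] <;> norm_num

lemma nPauli_inner (f g : Fin n → Fin 4) :
    (∑ i : Fin n → Fin 2, ∑ j : Fin n → Fin 2, star (nPauli f i j) * nPauli g i j) =
      if f = g then (2 : ℂ) ^ n else 0 := by
  have key : ∀ i j : Fin n → Fin 2, star (nPauli f i j) * nPauli g i j
      = ∏ k, (star (pauli (f k) (i k) (j k)) * pauli (g k) (i k) (j k)) := by
    intro i j
    rw [nPauli, nPauli, star_prod, ← Finset.prod_mul_distrib]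
  simp only [key]
  have h1 : ∀ i : Fin n → Fin 2,
      (∑ j : Fin n → Fin 2, ∏ k, (star (pauli (f k) (i k) (j k)) * pauli (g k) (i k) (j k)))
      = ∏ k, ∑ b : Fin 2, (star (pauli (f k) (i k) b) * pauli (g k) (i k) b) := by
    intro i
    rw [Fintype.prod_sum (fun k b => star (pauli (f k) (i k) b) * pauli (g k) (i k) b)]
  simp only [h1]
  rw [← Fintype.prod_sum (fun k a => ∑ b : Fin 2, star (pauli (f k) a b) * pauli (g k) a b)]
  have h2 : ∀ k, (∑ a : Fin 2, ∑ b : Fin 2, star (pauli (f k) a b) * pauli (g k) a b)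
      = if f k = g k then (2:ℂ) else 0 := fun k => pauli_inner (f k) (g k)
  simp only [h2]
  by_cases hfg : f = g
  · subst hfg
    simp
  · rw [if_neg hfg]
    obtain ⟨k, hk⟩ : ∃ k, f k ≠ g k := by
      by_contra hc; push_neg at hc; exact hfg (funext hc)
    exact Finset.prod_eq_zero (Finset.mem_univ k) (if_neg hk)

lemma nPauli_smul_inj {f g : Fin n → Fin 4} {c : ℂ} (hc : c ≠ 0)
    (h : nPauli f = c • nPauli g) : f = g := by
  by_contra hne
  have h1 := nPauli_inner g f
  rw [if_neg (fun e => hne e.symm), h] at h1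
  have h2 : (∑ i : Fin n → Fin 2, ∑ j : Fin n → Fin 2,
      star (nPauli g i j) * (c • nPauli g) i j)
      = c * ∑ i : Fin n → Fin 2, ∑ j : Fin n → Fin 2, star (nPauli g i j) * nPauli g i j := by
    rw [Finset.mul_sum]
    refine Finset.sum_congr rfl fun i _ => ?_
    rw [Finset.mul_sum]
    refine Finset.sum_congr rfl fun j _ => ?_
    simp [Matrix.smul_apply]; ring
  rw [h2, nPauli_inner, if_pos rfl] at h1
  have h3 : (2:ℂ)^n ≠ 0 := pow_ne_zero n two_ne_zero
  exact h3 (by have := mul_eq_zero.mp h1; tauto)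

lemma add_add_self (w v : Fin n → Fin 2) : w + v + v = w := by
  funext m
  have : ∀ t s : Fin 2, t + s + s = t := by decide
  exact this (w m) (v m)

lemma prod_single_pow (k : Fin n) (i : Fin n → Fin 2) :
    (∏ m, (-1:ℂ) ^ (((Pi.single k 1 : Fin n → Fin 2) m : ℕ) * (i m : ℕ))) = (-1:ℂ) ^ (i k : ℕ) := by
  rw [Fintype.prod_eq_single k]
  · simp
  · intro m hm
    simp [Pi.single_eq_of_ne hm]

lemma flip_const (d : (Fin n → Fin 2) → ℂ) (b : Fin n → ℂ)
    (h : ∀ i k, d i = b k * d (i + Pi.single k 1)) :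
    ∀ i, d i = (∏ k, b k ^ (i k : ℕ)) * d 0 := by
  suffices H : ∀ N : ℕ, ∀ i : Fin n → Fin 2,
      (Finset.univ.filter fun k => i k ≠ 0).card = N →
      d i = (∏ k, b k ^ (i k : ℕ)) * d 0 by
    intro i; exact H _ i rfl
  intro N
  induction N with
  | zero =>
    intro i hN
    have hi : i = 0 := by
      funext k
      show i k = 0
      by_contra hk
      have hmem : k ∈ Finset.univ.filter (fun k => i k ≠ 0) := by simp [hk]
      rw [Finset.card_eq_zero] at hN
      simp [hN] at hmem
    subst hi
    simp
  | succ m ih =>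
    intro i hN
    have hx : ∃ k, i k ≠ 0 := by
      by_contra hc; push_neg at hc
      have he : (Finset.univ.filter fun k => i k ≠ 0) = ∅ := by
        apply Finset.filter_eq_empty_iff.mpr; intro k _; simpa using hc k
      rw [he] at hN; simp at hN
    obtain ⟨k, hk⟩ := hx
    have hik : i k = 1 := by omega
    set i' := i + Pi.single k 1 with hi'
    have hi'k : i' k = 0 := by
      simp only [hi', Pi.add_apply, Pi.single_eq_same, hik]
      decide
    have hi'm : ∀ m, m ≠ k → i' m = i m := by
      intro m hm; simp [hi', Pi.single_eq_of_ne hm]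
    have hcard : (Finset.univ.filter fun m => i' m ≠ 0).card = m := by
      have he : (Finset.univ.filter fun m => i' m ≠ 0)
          = (Finset.univ.filter fun m => i m ≠ 0).erase k := by
        ext m
        simp only [Finset.mem_erase, Finset.mem_filter, Finset.mem_univ, true_and]
        constructor
        · intro hm
          have hmk : m ≠ k := by
            intro e; subst e; exact hm hi'k
          exact ⟨hmk, by rwa [hi'm m hmk] at hm⟩
        · intro ⟨hmk, hm⟩
          rwa [hi'm m hmk]
      rw [he, Finset.card_erase_of_mem (by simp [hk]), hN]
      omega
    have hd := h i k
    rw [hd, ih i' hcard]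
    have hprod : (∏ m, b m ^ (i m : ℕ)) = b k * ∏ m, b m ^ (i' m : ℕ) := by
      rw [← Finset.mul_prod_erase Finset.univ (fun m => b m ^ (i m : ℕ)) (Finset.mem_univ k),
          ← Finset.mul_prod_erase Finset.univ (fun m => b m ^ (i' m : ℕ)) (Finset.mem_univ k)]
      rw [hik, hi'k]
      simp only [Fin.val_one, pow_one, Fin.val_zero, pow_zero]
      rw [← mul_assoc, mul_one]
      congr 1
      refine Finset.prod_congr rfl fun m hm => ?_
      rw [hi'm m (Finset.ne_of_mem_erase hm)]
    rw [hprod]; ring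

lemma nPauli_Z (k : Fin n) (i j : Fin n → Fin 2) :
    nPauli (encF (0 : Fin n → Fin 2) (Pi.single k 1)) i j
      = if j = i then (-1:ℂ) ^ (i k : ℕ) else 0 := by
  rw [nPauli_encF]
  have hb : ∀ m : Fin n, base ((0 : Fin n → Fin 2) m) ((Pi.single k 1 : Fin n → Fin 2) m) = 1 := by
    intro m
    have : ((0 : Fin n → Fin 2) m) = 0 := rfl
    rw [this]
    unfold base
    rw [if_neg]
    rintro ⟨h0, -⟩
    exact absurd h0 (by decide)
  simp only [hb, Finset.prod_const_one, mul_one, add_zero, prod_single_pow]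

lemma nPauli_X (k : Fin n) (i j : Fin n → Fin 2) :
    nPauli (encF (Pi.single k 1) (0 : Fin n → Fin 2)) i j
      = if j = i + Pi.single k 1 then 1 else 0 := by
  rw [nPauli_encF]
  have hb : ∀ m : Fin n, base ((Pi.single k 1 : Fin n → Fin 2) m) ((0 : Fin n → Fin 2) m) = 1 := by
    intro m
    have : ((0 : Fin n → Fin 2) m) = 0 := rfl
    rw [this]
    unfold base
    rw [if_neg]
    rintro ⟨-, h0⟩
    exact absurd h0 (by decide)
  have he : ∀ m : Fin n, (-1:ℂ) ^ ((((0 : Fin n → Fin 2) m) : ℕ) * (i m : ℕ)) = 1 := by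
    intro m
    have : ((0 : Fin n → Fin 2) m) = 0 := rfl
    rw [this]
    simp
  simp only [hb, he, Finset.prod_const_one, mul_one]

lemma conj_back {m : Type*} [Fintype m] [DecidableEq m] {Q A B : Matrix m m ℂ}
    (h1 : star Q * Q = 1) (h : Q * A * star Q = B) : A = star Q * B * Q := by
  rw [← h]
  simp only [← mul_assoc]
  rw [h1, one_mul, mul_assoc, h1, mul_one]

end Stmt12Aux

open Stmt12Aux

/-- If two n-qubit Clifford unitaries U and Ũ send every Pauli to the
same unsigned Pauli under conjugation (i.e., they induce the same linear map
𝔽₂^{2n} → 𝔽₂^{2n}), then there is an n-qubit Pauli R such that conjugation by U and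
by RŨ agree on all density matrices. -/
theorem same_induced_map_implies_pauli_difference (n : ℕ)
    (U Ut : Matrix (Fin n → Fin 2) (Fin n → Fin 2) ℂ)
    (hU : U ∈ Matrix.unitaryGroup (Fin n → Fin 2) ℂ)
    (hUt : Ut ∈ Matrix.unitaryGroup (Fin n → Fin 2) ℂ)
    (hSame : ∀ f : Fin n → Fin 4, ∃ g : Fin n → Fin 4, ∃ s st : ℂ,
      (s = 1 ∨ s = -1) ∧ (st = 1 ∨ st = -1) ∧
      U * nPauli f * Uᴴ = s • nPauli g ∧ Ut * nPauli f * Utᴴ = st • nPauli g) :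
    ∃ r : Fin n → Fin 4,
      ∀ ρ : Matrix (Fin n → Fin 2) (Fin n → Fin 2) ℂ, ρ.PosSemidef → ρ.trace = 1 →
        U * ρ * Uᴴ = (nPauli r * Ut) * ρ * (nPauli r * Ut)ᴴ := by
  classical
  simp only [← Matrix.star_eq_conjTranspose] at hSame ⊢
  choose gf sf stf hsf hstf hUeq hUteq using hSame
  have hU1 : star U * U = 1 := Matrix.mem_unitaryGroup_iff'.mp hU
  have hU2 : U * star U = 1 := Matrix.mem_unitaryGroup_iff.mp hU
  have hUt1 : star Ut * Ut = 1 := Matrix.mem_unitaryGroup_iff'.mp hUt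
  have hUt2 : Ut * star Ut = 1 := Matrix.mem_unitaryGroup_iff.mp hUt
  set V : Matrix (Fin n → Fin 2) (Fin n → Fin 2) ℂ := U * star Ut with hV
  have hstarV : star V = Ut * star U := by rw [hV, Matrix.star_mul, star_star]
  have hVsV : star V * V = 1 := by
    rw [hstarV, hV, mul_assoc, ← mul_assoc (star U), hU1, one_mul, hUt2]
  have hVVs : V * star V = 1 := by
    rw [hstarV, hV, mul_assoc, ← mul_assoc (star Ut), hUt1, one_mul, hU2]
  -- injectivity of the induced map on unsigned Paulis
  have hinj : Function.Injective gf := by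
    intro f1 f2 hg
    have e1 : nPauli f1 = star U * (sf f1 • nPauli (gf f1)) * U := conj_back hU1 (hUeq f1)
    have e2 : nPauli f2 = star U * (sf f2 • nPauli (gf f2)) * U := conj_back hU1 (hUeq f2)
    have hs2 : sf f2 * sf f2 = 1 := by rcases hsf f2 with h'|h' <;> rw [h'] <;> ring
    have e2' : sf f2 • nPauli f2 = star U * nPauli (gf f2) * U := by
      have hcongr := congrArg (fun M => sf f2 • M) e2
      simp only [Matrix.mul_smul, Matrix.smul_mul, smul_smul, hs2, one_smul] at hcongr
      exact hcongr
    have e3 : nPauli f1 = (sf f1 * sf f2) • nPauli f2 := by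
      rw [e1, hg, Matrix.mul_smul, Matrix.smul_mul, ← e2', smul_smul]
    have hc : sf f1 * sf f2 ≠ 0 := by
      rcases hsf f1 with h'|h' <;> rcases hsf f2 with h''|h'' <;> rw [h', h''] <;> norm_num
    exact nPauli_smul_inj hc e3
  have hsurj : Function.Surjective gf := Finite.injective_iff_surjective.mp hinj
  -- V commutes with every Pauli up to sign
  have hcond : ∀ p : Fin n → Fin 4, ∃ e : ℂ, (e = 1 ∨ e = -1) ∧
      V * nPauli p = e • (nPauli p * V) := by
    intro p
    obtain ⟨f, rfl⟩ := hsurj p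
    have hst2 : stf f * stf f = 1 := by rcases hstf f with h'|h' <;> rw [h'] <;> ring
    refine ⟨stf f * sf f, ?_, ?_⟩
    · rcases hstf f with h'|h' <;> rcases hsf f with h''|h'' <;> rw [h', h''] <;> norm_num
    have e1 : nPauli f = star Ut * (stf f • nPauli (gf f)) * Ut := conj_back hUt1 (hUteq f)
    have e1' : nPauli f = stf f • (star Ut * nPauli (gf f) * Ut) := by
      rw [e1, Matrix.mul_smul, Matrix.smul_mul]
    have e2 := hUeq f
    rw [e1', Matrix.mul_smul, Matrix.smul_mul] at e2
    have e3 : U * (star Ut * nPauli (gf f) * Ut) * star U = V * nPauli (gf f) * star V := by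
      rw [hV, hstarV]; noncomm_ring
    rw [e3] at e2
    have e4 : V * nPauli (gf f) * star V = (stf f * sf f) • nPauli (gf f) := by
      have hcongr := congrArg (fun M => stf f • M) e2
      simp only [smul_smul, hst2, one_smul] at hcongr
      exact hcongr
    have e5 := congrArg (fun M => M * V) e4
    simp only [Matrix.smul_mul] at e5
    rw [mul_assoc, hVsV, mul_one] at e5
    exact e5
  -- extract signs on the Z- and X-type generators
  have hZc := fun k : Fin n => hcond (encF (0 : Fin n → Fin 2) (Pi.single k 1))
  choose a haor haeq using hZc
  have hXc := fun k : Fin n => hcond (encF (Pi.single k 1) (0 : Fin n → Fin 2))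
  choose b hbor hbeq using hXc
  -- entrywise Z-relations
  have eqZ : ∀ (k : Fin n) (i j : Fin n → Fin 2),
      V i j * (-1:ℂ) ^ (j k : ℕ) = a k * ((-1:ℂ) ^ (i k : ℕ) * V i j) := by
    intro k i j
    have h' : (V * nPauli (encF (0 : Fin n → Fin 2) (Pi.single k 1))) i j
        = (a k • (nPauli (encF (0 : Fin n → Fin 2) (Pi.single k 1)) * V)) i j := by
      rw [haeq k]
    rw [Matrix.smul_apply, Matrix.mul_apply, Matrix.mul_apply, smul_eq_mul] at h'
    simp only [nPauli_Z] at h'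
    have hs1 : (∑ m, V i m * (if j = m then (-1:ℂ) ^ (m k : ℕ) else 0))
        = V i j * (-1:ℂ) ^ (j k : ℕ) := by
      rw [Finset.sum_eq_single j]
      · rw [if_pos rfl]
      · intro m _ hm
        rw [if_neg (fun he => hm he.symm), mul_zero]
      · intro habs; exact absurd (Finset.mem_univ _) habs
    have hs2 : (∑ m, (if m = i then (-1:ℂ) ^ (i k : ℕ) else 0) * V m j)
        = (-1:ℂ) ^ (i k : ℕ) * V i j := by
      rw [Finset.sum_eq_single i]
      · rw [if_pos rfl]
      · intro m _ hm
        rw [if_neg hm, zero_mul]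
      · intro habs; exact absurd (Finset.mem_univ _) habs
    rw [hs1, hs2] at h'
    exact h'
  set x : Fin n → Fin 2 := fun k => if a k = 1 then 0 else 1 with hxdef
  have hdiag : ∀ i j, V i j ≠ 0 → j = i + x := by
    intro i j hne
    funext k
    show j k = (i + x) k
    rw [Pi.add_apply]
    have hax : a k = (-1:ℂ) ^ ((x k : ℕ)) := by
      rcases haor k with h'|h'
      · simp [hxdef, h']
      · rw [hxdef]
        simp only [h']
        rw [if_neg (by norm_num : ¬ (-1:ℂ) = 1)]
        norm_num
    have h2 : (-1:ℂ) ^ (j k : ℕ) = a k * (-1:ℂ) ^ (i k : ℕ) := by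
      have h3 := eqZ k i j
      have h4 : V i j * ((-1:ℂ) ^ (j k : ℕ)) = V i j * (a k * (-1:ℂ) ^ (i k : ℕ)) := by
        rw [h3]; ring
      exact mul_left_cancel₀ hne h4
    rw [hax] at h2
    have hik : i k = 0 ∨ i k = 1 := by omega
    have hjk : j k = 0 ∨ j k = 1 := by omega
    have hxk : x k = 0 ∨ x k = 1 := by omega
    rcases hik with h'|h' <;> rcases hjk with h''|h'' <;> rcases hxk with h'''|h''' <;>
      simp only [h', h'', h''', Fin.val_zero, Fin.val_one, pow_zero, pow_one] at h2 ⊢ <;>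
      first
        | decide
        | norm_num at h2
  -- entrywise X-relations
  have eqX : ∀ (k : Fin n) (i j : Fin n → Fin 2),
      V i (j + Pi.single k 1) = b k * V (i + Pi.single k 1) j := by
    intro k i j
    have h' : (V * nPauli (encF (Pi.single k 1) (0 : Fin n → Fin 2))) i j
        = (b k • (nPauli (encF (Pi.single k 1) (0 : Fin n → Fin 2)) * V)) i j := by
      rw [hbeq k]
    rw [Matrix.smul_apply, Matrix.mul_apply, Matrix.mul_apply, smul_eq_mul] at h'
    simp only [nPauli_X] at h'
    have hs1 : (∑ m, V i m * (if j = m + Pi.single k 1 then (1:ℂ) else 0))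
        = V i (j + Pi.single k 1) := by
      rw [Finset.sum_eq_single (j + Pi.single k 1)]
      · rw [if_pos (add_add_self j _).symm, mul_one]
      · intro m _ hm
        rw [if_neg, mul_zero]
        intro he
        exact hm (by rw [he, add_add_self])
      · intro habs; exact absurd (Finset.mem_univ _) habs
    have hs2 : (∑ m, (if m = i + Pi.single k 1 then (1:ℂ) else 0) * V m j)
        = V (i + Pi.single k 1) j := by
      rw [Finset.sum_eq_single (i + Pi.single k 1)]
      · rw [if_pos rfl, one_mul]
      · intro m _ hm
        rw [if_neg hm, zero_mul]
      · intro habs; exact absurd (Finset.mem_univ _) habs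
    rw [hs1, hs2] at h'
    exact h'
  -- the shifted diagonal satisfies a flip recurrence
  have hflip : ∀ i, V i (i + x) = (∏ k, b k ^ (i k : ℕ)) * V 0 (0 + x) := by
    have hrec : ∀ (i : Fin n → Fin 2) (k : Fin n),
        (fun i => V i (i + x)) i = b k * (fun i => V i (i + x)) (i + Pi.single k 1) := by
      intro i k
      show V i (i + x) = b k * V (i + Pi.single k 1) (i + Pi.single k 1 + x)
      have h' := eqX k i (i + x + Pi.single k 1)
      rw [add_add_self] at h'
      have hcomm : i + x + Pi.single k 1 = i + Pi.single k 1 + x := by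
        rw [add_right_comm]
      rw [hcomm] at h'
      exact h'
    intro i
    simpa using flip_const (fun i => V i (i + x)) b hrec i
  set z : Fin n → Fin 2 := fun k => if b k = 1 then 0 else 1 with hzdef
  have hbz : ∀ k, b k = (-1:ℂ) ^ (z k : ℕ) := by
    intro k
    rcases hbor k with h'|h'
    · simp [hzdef, h']
    · rw [hzdef]
      simp only [h']
      rw [if_neg (by norm_num : ¬ (-1:ℂ) = 1)]
      norm_num
  set r : Fin n → Fin 4 := encF x z with hrdef
  set c0 : ℂ := ∏ k, base (x k) (z k) with hc0def
  have hc0 : c0 ≠ 0 := by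
    rw [hc0def]
    exact Finset.prod_ne_zero_iff.mpr fun k _ => base_ne_zero _ _
  have hnr : ∀ i j, nPauli r i j = if j = i + x then (∏ k, b k ^ (i k : ℕ)) * c0 else 0 := by
    intro i j
    rw [hrdef, nPauli_encF]
    have hpe : (∏ k, (-1:ℂ) ^ ((z k : ℕ) * (i k : ℕ))) = ∏ k, b k ^ (i k : ℕ) := by
      refine Finset.prod_congr rfl fun k _ => ?_
      rw [hbz k, ← pow_mul]
    rw [hpe, ← hc0def]
  set lam : ℂ := V 0 (0 + x) * c0⁻¹ with hlamdef
  have hVlam : ∀ i j, V i j = lam * nPauli r i j := by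
    intro i j
    rw [hnr]
    by_cases hij : j = i + x
    · rw [if_pos hij, hij, hflip i, hlamdef]
      field_simp
    · rw [if_neg hij, mul_zero]
      by_contra hcon
      exact hij (hdiag i j hcon)
  -- |lambda| = 1
  have hd0 : V 0 (0 + x) * star (V 0 (0 + x)) = 1 := by
    have h00 : (V * star V) 0 0 = 1 := by rw [hVVs]; simp [Matrix.one_apply]
    rw [Matrix.mul_apply] at h00
    simp only [Matrix.star_apply] at h00
    rw [Finset.sum_eq_single (0 + x)] at h00
    · exact h00
    · intro m _ hm
      have hz0 : V 0 m = 0 := by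
        by_contra hc; exact hm (hdiag 0 m hc)
      rw [hz0, zero_mul]
    · intro habs; exact absurd (Finset.mem_univ _) habs
  have hc0c : c0 * star c0 = 1 := by
    rw [hc0def, star_prod, ← Finset.prod_mul_distrib]
    rw [Finset.prod_congr rfl fun k _ => base_mul_star (x k) (z k)]
    exact Finset.prod_const_one
  have hlam : lam * star lam = 1 := by
    rw [hlamdef, star_mul', star_inv₀]
    have e2 : (star c0)⁻¹ = c0 := by
      apply inv_eq_of_mul_eq_one_right
      rw [mul_comm]; exact hc0c
    have e1 : c0⁻¹ = star c0 := inv_eq_of_mul_eq_one_right hc0c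
    rw [e1, e2]
    calc V 0 (0 + x) * star c0 * (star (V 0 (0 + x)) * c0)
        = (V 0 (0 + x) * star (V 0 (0 + x))) * (c0 * star c0) := by ring
      _ = 1 := by rw [hd0, hc0c, mul_one]
  -- conclude
  refine ⟨r, fun ρ _ _ => ?_⟩
  have hUV : U = V * Ut := by
    rw [hV, mul_assoc, hUt1, mul_one]
  have hVmat : V = lam • nPauli r := by
    ext i j
    rw [Matrix.smul_apply, smul_eq_mul]
    exact hVlam i j
  rw [hUV, hVmat]
  simp only [Matrix.smul_mul, Matrix.mul_smul, star_smul, smul_smul]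
  rw [mul_comm (star lam) lam, hlam, one_smul]
end
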